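/- For the Kerr metric in Boyer–Lindquist coordinates, the symmetric matrix field K(r,θ) = r²·g⁻¹(r,θ) + Δ(r)⁻¹·S(r)S(r)ᵀ − Δ(r)·E_rr, where S(r) ∈ ℝ⁴ has components S^t = r² + a², S^r = S^θ = 0, S^φ = a, and E_rr is the symmetric matrix whose only nonzero entry is the (r,r)-entry equal to 1, is a Killing tensor for g⁻¹: {H, F_K} = 0 identically on U × ℝ⁴. -/

import Mathlib

set_option maxHeartbeats 4000000


open Real

noncomputable section

/-- Partial derivative of a phase-space function with respect to the `μ`-th
position coordinate. -/
def pdx {n : ℕ} (μ : Fin n) (F : (Fin n → ℝ) × (Fin n → ℝ) → ℝ)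
    (z : (Fin n → ℝ) × (Fin n → ℝ)) : ℝ :=
  deriv (fun s => F (Function.update z.1 μ s, z.2)) (z.1 μ)

/-- Partial derivative of a phase-space function with respect to the `μ`-th
momentum coordinate. -/
def pdp {n : ℕ} (μ : Fin n) (F : (Fin n → ℝ) × (Fin n → ℝ) → ℝ)
    (z : (Fin n → ℝ) × (Fin n → ℝ)) : ℝ :=
  deriv (fun s => F (z.1, Function.update z.2 μ s)) (z.2 μ)

/-- Canonical Poisson bracket. -/
def poisson {n : ℕ} (A B : (Fin n → ℝ) × (Fin n → ℝ) → ℝ)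
    (z : (Fin n → ℝ) × (Fin n → ℝ)) : ℝ :=
  ∑ μ : Fin n, (pdp μ A z * pdx μ B z - pdx μ A z * pdp μ B z)

/-- Quadratic momentum function of a matrix field depending on `(r,θ) = (x 1, x 2)`. -/
def quadF4 (K : ℝ → ℝ → Matrix (Fin 4) (Fin 4) ℝ)
    (z : (Fin 4 → ℝ) × (Fin 4 → ℝ)) : ℝ :=
  ∑ μ : Fin 4, ∑ ν : Fin 4, K (z.1 1) (z.1 2) μ ν * z.2 μ * z.2 ν

/-- The matrix with only nonzero entry `1` at the `(r,r)` position. -/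
def Err : Matrix (Fin 4) (Fin 4) ℝ :=
  Matrix.of ![![0,0,0,0], ![0,1,0,0], ![0,0,0,0], ![0,0,0,0]]

namespace Kerr

variable (M a : ℝ)

def Δ (r : ℝ) : ℝ := r * (r - 2*M) + a^2
def Sig (r θ : ℝ) : ℝ := r^2 + a^2 * (Real.cos θ)^2
def f (r θ : ℝ) : ℝ := (Δ M a r - a^2 * (Real.sin θ)^2) / Sig a r θ
def ω (r θ : ℝ) : ℝ :=
  -(2*M*a*r * (Real.sin θ)^2) / (Δ M a r - a^2 * (Real.sin θ)^2)

/-- The Kerr metric in Boyer–Lindquist coordinates `(t,r,θ,φ)`. -/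
def g (r θ : ℝ) : Matrix (Fin 4) (Fin 4) ℝ :=
  Matrix.of
    ![![-(f M a r θ), 0, 0, f M a r θ * ω M a r θ],
      ![0, Sig a r θ / Δ M a r, 0, 0],
      ![0, 0, Sig a r θ, 0],
      ![f M a r θ * ω M a r θ, 0, 0,
        Sig a r θ * Δ M a r * (Real.sin θ)^2 / (Δ M a r - a^2 * (Real.sin θ)^2)
          - f M a r θ * (ω M a r θ)^2]]

/-- The vector `S` with components `S^t = r² + a²`, `S^φ = a`. -/
def S (r : ℝ) : Fin 4 → ℝ := ![r^2 + a^2, 0, 0, a]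

end Kerr


-- ===== auxiliary material for the proof =====

lemma hasDerivAt_congr {f : ℝ → ℝ} {d d' : ℝ} {x : ℝ} (h : HasDerivAt f d x) (e : d = d') :
    HasDerivAt f d' x := e ▸ h

def Ginv (M a r θ : ℝ) : Matrix (Fin 4) (Fin 4) ℝ :=
  Matrix.of
    ![![-(((r^2+a^2)^2 - a^2*(Kerr.Δ M a r)*(Real.sin θ)^2)) / (Kerr.Sig a r θ * Kerr.Δ M a r), 0, 0,
        -(2*M*a*r) / (Kerr.Sig a r θ * Kerr.Δ M a r)],
      ![0, Kerr.Δ M a r / Kerr.Sig a r θ, 0, 0],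
      ![0, 0, (Kerr.Sig a r θ)⁻¹, 0],
      ![-(2*M*a*r) / (Kerr.Sig a r θ * Kerr.Δ M a r), 0, 0,
        (Kerr.Δ M a r - a^2*(Real.sin θ)^2) / (Kerr.Sig a r θ * Kerr.Δ M a r * (Real.sin θ)^2)]]

lemma g_inv_eq (M a r θ : ℝ) (hΔ : Kerr.Δ M a r ≠ 0) (hSg : Kerr.Sig a r θ ≠ 0)
    (hs : Real.sin θ ≠ 0) (hD : Kerr.Δ M a r - a^2*(Real.sin θ)^2 ≠ 0) :
    (Kerr.g M a r θ)⁻¹ = Ginv M a r θ := by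
  apply Matrix.inv_eq_right_inv
  have hc : (Real.cos θ)^2 = 1 - (Real.sin θ)^2 := Real.cos_sq' θ
  simp only [Kerr.Δ, Kerr.Sig, Real.cos_sq'] at hΔ hSg hD
  ext i j
  fin_cases i <;> fin_cases j <;>
    · simp only [Kerr.g, Ginv, Kerr.f, Kerr.ω, Kerr.Δ, Kerr.Sig, Real.cos_sq',
        Matrix.mul_apply, Fin.sum_univ_four, Matrix.of_apply, Matrix.cons_val',
        Matrix.cons_val_zero, Matrix.cons_val_one, Matrix.head_cons, Matrix.head_fin_const,
        Matrix.cons_val_fin_one, Matrix.empty_val', Matrix.cons_val_two, Matrix.tail_cons,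
        Matrix.cons_val_three, Matrix.one_apply, Fin.isValue]
      norm_num [Fin.ext_iff]
      try field_simp
      try ring

lemma pdx_other (K : ℝ → ℝ → Matrix (Fin 4) (Fin 4) ℝ)
    (z : (Fin 4 → ℝ) × (Fin 4 → ℝ)) (μ : Fin 4) (h1 : (1 : Fin 4) ≠ μ) (h2 : (2 : Fin 4) ≠ μ) :
    pdx μ (quadF4 K) z = 0 := by
  have : (fun s => quadF4 K (Function.update z.1 μ s, z.2)) = fun _ => quadF4 K z := by
    funext s
    simp [quadF4, Function.update_of_ne h1, Function.update_of_ne h2]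
  rw [pdx, this]
  exact deriv_const _ _

lemma pdp_quadF4 (K : ℝ → ℝ → Matrix (Fin 4) (Fin 4) ℝ)
    (z : (Fin 4 → ℝ) × (Fin 4 → ℝ)) (μ : Fin 4) :
    pdp μ (quadF4 K) z
      = ∑ ν : Fin 4, (K (z.1 1) (z.1 2) μ ν + K (z.1 1) (z.1 2) ν μ) * z.2 ν := by
  have hu : ∀ α : Fin 4, HasDerivAt (fun s => Function.update z.2 μ s α)
      (if α = μ then 1 else 0) (z.2 μ) := by
    intro α
    by_cases h : α = μ
    · subst h
      simp only [if_pos rfl]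
      have : (fun s => Function.update z.2 α s α) = fun s => s := by
        funext s; exact Function.update_self α s z.2
      rw [this]; exact hasDerivAt_id (z.2 α)
    · simp only [if_neg h]
      have : (fun s => Function.update z.2 μ s α) = fun _ => z.2 α := by
        funext s; exact Function.update_of_ne h _ _
      rw [this]; exact hasDerivAt_const _ _
  have hterm : ∀ α β : Fin 4, HasDerivAt
      (fun s => K (z.1 1) (z.1 2) α β * Function.update z.2 μ s α * Function.update z.2 μ s β)
      (K (z.1 1) (z.1 2) α β * ((if α = μ then (1:ℝ) else 0) * z.2 β
        + z.2 α * (if β = μ then 1 else 0))) (z.2 μ) := by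
    intro α β
    have h := (((hu α).const_mul (K (z.1 1) (z.1 2) α β)).mul (hu β))
    simp only [Function.update_eq_self] at h
    exact hasDerivAt_congr h (by ring)
  have hF : HasDerivAt (fun s => quadF4 K (z.1, Function.update z.2 μ s))
      (∑ α : Fin 4, ∑ β : Fin 4, K (z.1 1) (z.1 2) α β *
        ((if α = μ then (1:ℝ) else 0) * z.2 β + z.2 α * (if β = μ then 1 else 0)))
      (z.2 μ) := by
    have : (fun s => quadF4 K (z.1, Function.update z.2 μ s))
        = fun s => ∑ α : Fin 4, ∑ β : Fin 4,
            K (z.1 1) (z.1 2) α β * Function.update z.2 μ s α * Function.update z.2 μ s β := rfl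
    rw [this]
    exact HasDerivAt.fun_sum fun α _ => HasDerivAt.fun_sum fun β _ => hterm α β
  rw [pdp, hF.deriv]
  fin_cases μ <;> simp [Fin.sum_univ_four] <;> ring

def Qf (a : ℝ) (p : Fin 4 → ℝ) (s : ℝ) : ℝ := (s^2+a^2)*p 0 + a*p 3

def Nf (M a θ : ℝ) (p : Fin 4 → ℝ) (s : ℝ) : ℝ :=
  (-((Qf a p s)^2)) / Kerr.Δ M a s + Kerr.Δ M a s * (p 1)^2
    + ((p 3/Real.sin θ + a*Real.sin θ*p 0)^2 + (p 2)^2)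

def Phif (M a θ : ℝ) (p : Fin 4 → ℝ) (s : ℝ) : ℝ := Nf M a θ p s / Kerr.Sig a s θ

def Psif (M a θ : ℝ) (p : Fin 4 → ℝ) (s : ℝ) : ℝ :=
  s^2 * Phif M a θ p s + (Kerr.Δ M a s)⁻¹ * (Qf a p s)^2 - Kerr.Δ M a s * (p 1)^2

def dN (M a θ : ℝ) (p : Fin 4 → ℝ) (r : ℝ) : ℝ :=
  ((-(2*(Qf a p r)*(2*r*p 0))) * Kerr.Δ M a r - (-((Qf a p r)^2)) * (2*r-2*M))
      / (Kerr.Δ M a r)^2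
    + (2*r-2*M)*(p 1)^2

def dPhi (M a θ : ℝ) (p : Fin 4 → ℝ) (r : ℝ) : ℝ :=
  (dN M a θ p r * Kerr.Sig a r θ - Nf M a θ p r * (2*r)) / (Kerr.Sig a r θ)^2

def dPsi (M a θ : ℝ) (p : Fin 4 → ℝ) (r : ℝ) : ℝ :=
  2*r*Phif M a θ p r + r^2 * dPhi M a θ p r
    + (((-(2*r-2*M))/(Kerr.Δ M a r)^2) * (Qf a p r)^2
        + (Kerr.Δ M a r)⁻¹ * (2*(Qf a p r)*(2*r*p 0)))
    - (2*r-2*M)*(p 1)^2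

lemma hasDerivAt_Q (a : ℝ) (p : Fin 4 → ℝ) (r : ℝ) :
    HasDerivAt (Qf a p) (2*r*p 0) r := by
  have h := (((hasDerivAt_pow 2 r).add_const (a^2)).mul_const (p 0)).add_const (a*p 3)
  exact hasDerivAt_congr h (by push_cast; ring)

lemma hasDerivAt_Delta (M a r : ℝ) : HasDerivAt (Kerr.Δ M a) (2*r-2*M) r := by
  have h := ((hasDerivAt_id r).mul ((hasDerivAt_id r).sub_const (2*M))).add_const (a^2)
  exact hasDerivAt_congr h (by simp; ring)

lemma hasDerivAt_Sig (a θ r : ℝ) : HasDerivAt (fun s => Kerr.Sig a s θ) (2*r) r := by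
  have h := (hasDerivAt_pow 2 r).add_const (a^2 * (Real.cos θ)^2)
  exact hasDerivAt_congr h (by push_cast; ring)

lemma hasDerivAt_N (M a θ : ℝ) (p : Fin 4 → ℝ) (r : ℝ) (hΔ : Kerr.Δ M a r ≠ 0) :
    HasDerivAt (Nf M a θ p) (dN M a θ p r) r := by
  have hQ2 := (hasDerivAt_Q a p r).pow 2
  have hfrac := (hQ2.neg).div (hasDerivAt_Delta M a r) hΔ
  have h := (hfrac.add ((hasDerivAt_Delta M a r).mul_const ((p 1)^2))).add_const
    ((p 3/Real.sin θ + a*Real.sin θ*p 0)^2 + (p 2)^2)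
  exact hasDerivAt_congr h (by unfold dN Qf; push_cast; simp only [Pi.pow_apply, Pi.neg_apply, Pi.inv_apply]; ring)

lemma hasDerivAt_Phi (M a θ : ℝ) (p : Fin 4 → ℝ) (r : ℝ) (hΔ : Kerr.Δ M a r ≠ 0)
    (hSg : Kerr.Sig a r θ ≠ 0) : HasDerivAt (Phif M a θ p) (dPhi M a θ p r) r := by
  have h := (hasDerivAt_N M a θ p r hΔ).div (hasDerivAt_Sig a θ r) hSg
  exact hasDerivAt_congr h (by unfold dPhi; ring)

lemma hasDerivAt_Psi (M a θ : ℝ) (p : Fin 4 → ℝ) (r : ℝ) (hΔ : Kerr.Δ M a r ≠ 0)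
    (hSg : Kerr.Sig a r θ ≠ 0) : HasDerivAt (Psif M a θ p) (dPsi M a θ p r) r := by
  have hQ2 := (hasDerivAt_Q a p r).pow 2
  have hinv := (hasDerivAt_Delta M a r).inv hΔ
  have h := (((hasDerivAt_pow 2 r).mul (hasDerivAt_Phi M a θ p r hΔ hSg)).add
      (hinv.mul hQ2)).sub ((hasDerivAt_Delta M a r).mul_const ((p 1)^2))
  exact hasDerivAt_congr h (by unfold dPsi Qf; push_cast; simp only [Pi.pow_apply, Pi.neg_apply, Pi.inv_apply]; ring)

lemma quad_ginv (M a : ℝ) (y p : Fin 4 → ℝ)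
    (hΔ : Kerr.Δ M a (y 1) ≠ 0) (hSg : Kerr.Sig a (y 1) (y 2) ≠ 0)
    (hs : Real.sin (y 2) ≠ 0) (hD : Kerr.Δ M a (y 1) - a^2*(Real.sin (y 2))^2 ≠ 0) :
    quadF4 (fun r θ => (Kerr.g M a r θ)⁻¹) (y, p) = Phif M a (y 2) p (y 1) := by
  simp only [quadF4, Fin.sum_univ_four, g_inv_eq M a (y 1) (y 2) hΔ hSg hs hD, Ginv,
    Matrix.of_apply, Matrix.cons_val', Matrix.cons_val_zero, Matrix.cons_val_one,
    Matrix.head_cons, Matrix.empty_val', Matrix.cons_val_fin_one, Matrix.cons_val_two,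
    Matrix.tail_cons, Matrix.cons_val_three, Matrix.head_fin_const]
  unfold Phif Nf Qf Kerr.Δ
  simp only [Kerr.Δ] at hΔ hD
  field_simp
  ring

lemma quadB_eq (M a : ℝ) (y p : Fin 4 → ℝ) :
    quadF4 (fun r θ =>
        (r^2) • (Kerr.g M a r θ)⁻¹
          + (Kerr.Δ M a r)⁻¹ • Matrix.vecMulVec (Kerr.S a r) (Kerr.S a r)
          - Kerr.Δ M a r • Err) (y, p)
      = (y 1)^2 * quadF4 (fun r θ => (Kerr.g M a r θ)⁻¹) (y, p)
        + (Kerr.Δ M a (y 1))⁻¹ * (Qf a p (y 1))^2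
        - Kerr.Δ M a (y 1) * (p 1)^2 := by
  simp only [quadF4, Fin.sum_univ_four, Matrix.sub_apply, Matrix.add_apply,
    Matrix.smul_apply, Matrix.vecMulVec_apply, Kerr.S, Err, smul_eq_mul, Qf,
    Matrix.of_apply, Matrix.cons_val', Matrix.cons_val_zero, Matrix.cons_val_one,
    Matrix.head_cons, Matrix.empty_val', Matrix.cons_val_fin_one, Matrix.cons_val_two,
    Matrix.tail_cons, Matrix.cons_val_three, Matrix.head_fin_const]
  ring


/-- The field
`K = r²·g⁻¹ + Δ⁻¹·SSᵀ − Δ·E_rr` is a Killing tensor for the Kerr metric: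
`{H, F_K} = 0` identically on `U × ℝ⁴`. -/
theorem kerr_killing_tensor (M a : ℝ) :
    ∀ x : Fin 4 → ℝ,
      Kerr.Δ M a (x 1) ≠ 0 →
      Kerr.Sig a (x 1) (x 2) ≠ 0 →
      Real.sin (x 2) ≠ 0 →
      Kerr.Δ M a (x 1) - a^2 * (Real.sin (x 2))^2 ≠ 0 →
      ∀ p : Fin 4 → ℝ,
        poisson
          (quadF4 (fun r θ => (Kerr.g M a r θ)⁻¹))
          (quadF4 (fun r θ =>
            (r^2) • (Kerr.g M a r θ)⁻¹
              + (Kerr.Δ M a r)⁻¹ • Matrix.vecMulVec (Kerr.S a r) (Kerr.S a r)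
              - Kerr.Δ M a r • Err))
          (x, p) = 0 := by
  intro x hΔ hSg hs hD p
  have hnear : ∀ᶠ s in nhds (x 1),
      Kerr.Δ M a s ≠ 0 ∧ Kerr.Sig a s (x 2) ≠ 0
        ∧ Kerr.Δ M a s - a^2*(Real.sin (x 2))^2 ≠ 0 := by
    have c1 : Continuous (fun s => Kerr.Δ M a s) := by unfold Kerr.Δ; fun_prop
    have c2 : Continuous (fun s => Kerr.Sig a s (x 2)) := by unfold Kerr.Sig; fun_prop
    have c3 : Continuous (fun s => Kerr.Δ M a s - a^2*(Real.sin (x 2))^2) := by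
      unfold Kerr.Δ; fun_prop
    filter_upwards [c1.continuousAt.eventually_ne hΔ, c2.continuousAt.eventually_ne hSg,
      c3.continuousAt.eventually_ne hD] with s h1 h2 h3
    exact ⟨h1, h2, h3⟩
  have hevA : (fun s => quadF4 (fun r θ => (Kerr.g M a r θ)⁻¹) (Function.update x 1 s, p))
      =ᶠ[nhds (x 1)] Phif M a (x 2) p := by
    filter_upwards [hnear] with s hcond
    have e1 : Function.update x 1 s 1 = s := Function.update_self _ _ _
    have e2 : Function.update x 1 s 2 = x 2 := Function.update_of_ne (by decide) _ _
    rw [quad_ginv M a (Function.update x 1 s) p (by rw [e1]; exact hcond.1)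
      (by rw [e1, e2]; exact hcond.2.1) (by rw [e2]; exact hs)
      (by rw [e1, e2]; exact hcond.2.2), e1, e2]
  have hevB : (fun s => quadF4 (fun r θ =>
        (r^2) • (Kerr.g M a r θ)⁻¹
          + (Kerr.Δ M a r)⁻¹ • Matrix.vecMulVec (Kerr.S a r) (Kerr.S a r)
          - Kerr.Δ M a r • Err) (Function.update x 1 s, p))
      =ᶠ[nhds (x 1)] Psif M a (x 2) p := by
    filter_upwards [hnear] with s hcond
    have e1 : Function.update x 1 s 1 = s := Function.update_self _ _ _
    have e2 : Function.update x 1 s 2 = x 2 := Function.update_of_ne (by decide) _ _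
    rw [quadB_eq, quad_ginv M a (Function.update x 1 s) p (by rw [e1]; exact hcond.1)
      (by rw [e1, e2]; exact hcond.2.1) (by rw [e2]; exact hs)
      (by rw [e1, e2]; exact hcond.2.2), e1, e2]
    simp only [Psif]
  have hΦ := hasDerivAt_Phi M a (x 2) p (x 1) hΔ hSg
  have hΨ := hasDerivAt_Psi M a (x 2) p (x 1) hΔ hSg
  have epdx1A : pdx 1 (quadF4 (fun r θ => (Kerr.g M a r θ)⁻¹)) (x, p)
      = dPhi M a (x 2) p (x 1) := by
    have h0 : pdx 1 (quadF4 (fun r θ => (Kerr.g M a r θ)⁻¹)) (x, p)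
        = deriv (fun s => quadF4 (fun r θ => (Kerr.g M a r θ)⁻¹)
            (Function.update x 1 s, p)) (x 1) := rfl
    rw [h0, hevA.deriv_eq, hΦ.deriv]
  have epdx1B : pdx 1 (quadF4 (fun r θ =>
        (r^2) • (Kerr.g M a r θ)⁻¹
          + (Kerr.Δ M a r)⁻¹ • Matrix.vecMulVec (Kerr.S a r) (Kerr.S a r)
          - Kerr.Δ M a r • Err)) (x, p) = dPsi M a (x 2) p (x 1) := by
    have h0 : pdx 1 (quadF4 (fun r θ =>
          (r^2) • (Kerr.g M a r θ)⁻¹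
            + (Kerr.Δ M a r)⁻¹ • Matrix.vecMulVec (Kerr.S a r) (Kerr.S a r)
            - Kerr.Δ M a r • Err)) (x, p)
        = deriv (fun s => quadF4 (fun r θ =>
            (r^2) • (Kerr.g M a r θ)⁻¹
              + (Kerr.Δ M a r)⁻¹ • Matrix.vecMulVec (Kerr.S a r) (Kerr.S a r)
              - Kerr.Δ M a r • Err) (Function.update x 1 s, p)) (x 1) := rfl
    rw [h0, hevB.deriv_eq, hΨ.deriv]
  have epdx2B : pdx 2 (quadF4 (fun r θ =>
        (r^2) • (Kerr.g M a r θ)⁻¹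
          + (Kerr.Δ M a r)⁻¹ • Matrix.vecMulVec (Kerr.S a r) (Kerr.S a r)
          - Kerr.Δ M a r • Err)) (x, p)
      = (x 1)^2 * pdx 2 (quadF4 (fun r θ => (Kerr.g M a r θ)⁻¹)) (x, p) := by
    have h0 : pdx 2 (quadF4 (fun r θ =>
          (r^2) • (Kerr.g M a r θ)⁻¹
            + (Kerr.Δ M a r)⁻¹ • Matrix.vecMulVec (Kerr.S a r) (Kerr.S a r)
            - Kerr.Δ M a r • Err)) (x, p)
        = deriv (fun t => quadF4 (fun r θ =>
            (r^2) • (Kerr.g M a r θ)⁻¹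
              + (Kerr.Δ M a r)⁻¹ • Matrix.vecMulVec (Kerr.S a r) (Kerr.S a r)
              - Kerr.Δ M a r • Err) (Function.update x 2 t, p)) (x 2) := rfl
    have h1 : pdx 2 (quadF4 (fun r θ => (Kerr.g M a r θ)⁻¹)) (x, p)
        = deriv (fun t => quadF4 (fun r θ => (Kerr.g M a r θ)⁻¹)
            (Function.update x 2 t, p)) (x 2) := rfl
    rw [h0, h1]
    have hfe : (fun t => quadF4 (fun r θ =>
          (r^2) • (Kerr.g M a r θ)⁻¹
            + (Kerr.Δ M a r)⁻¹ • Matrix.vecMulVec (Kerr.S a r) (Kerr.S a r)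
            - Kerr.Δ M a r • Err) (Function.update x 2 t, p))
        = fun t => (x 1)^2 * quadF4 (fun r θ => (Kerr.g M a r θ)⁻¹)
              (Function.update x 2 t, p)
            + ((Kerr.Δ M a (x 1))⁻¹ * (Qf a p (x 1))^2 - Kerr.Δ M a (x 1) * (p 1)^2) := by
      funext t
      have e1 : Function.update x 2 t 1 = x 1 := Function.update_of_ne (by decide) _ _
      rw [quadB_eq, e1]; ring
    rw [hfe, deriv_add_const, deriv_const_mul_field]
  have epdp1A : pdp 1 (quadF4 (fun r θ => (Kerr.g M a r θ)⁻¹)) (x, p)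
      = 2*(Kerr.Δ M a (x 1)/Kerr.Sig a (x 1) (x 2))*p 1 := by
    rw [pdp_quadF4]
    simp only [Fin.sum_univ_four, g_inv_eq M a (x 1) (x 2) hΔ hSg hs hD, Ginv, Err, Kerr.S,
      Matrix.vecMulVec_apply, Matrix.add_apply, Matrix.sub_apply, Matrix.smul_apply,
      Pi.smul_apply, smul_eq_mul, Matrix.of_apply, Matrix.cons_val', Matrix.cons_val_zero,
      Matrix.cons_val_one, Matrix.head_cons, Matrix.empty_val', Matrix.cons_val_fin_one,
      Matrix.cons_val_two, Matrix.tail_cons, Matrix.cons_val_three, Matrix.head_fin_const]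
    ring
  have epdp2A : pdp 2 (quadF4 (fun r θ => (Kerr.g M a r θ)⁻¹)) (x, p)
      = 2*(Kerr.Sig a (x 1) (x 2))⁻¹*p 2 := by
    rw [pdp_quadF4]
    simp only [Fin.sum_univ_four, g_inv_eq M a (x 1) (x 2) hΔ hSg hs hD, Ginv, Err, Kerr.S,
      Matrix.vecMulVec_apply, Matrix.add_apply, Matrix.sub_apply, Matrix.smul_apply,
      Pi.smul_apply, smul_eq_mul, Matrix.of_apply, Matrix.cons_val', Matrix.cons_val_zero,
      Matrix.cons_val_one, Matrix.head_cons, Matrix.empty_val', Matrix.cons_val_fin_one,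
      Matrix.cons_val_two, Matrix.tail_cons, Matrix.cons_val_three, Matrix.head_fin_const]
    ring
  have epdp1B : pdp 1 (quadF4 (fun r θ =>
        (r^2) • (Kerr.g M a r θ)⁻¹
          + (Kerr.Δ M a r)⁻¹ • Matrix.vecMulVec (Kerr.S a r) (Kerr.S a r)
          - Kerr.Δ M a r • Err)) (x, p)
      = 2*((x 1)^2*(Kerr.Δ M a (x 1)/Kerr.Sig a (x 1) (x 2)) - Kerr.Δ M a (x 1))*p 1 := by
    rw [pdp_quadF4]
    simp only [Fin.sum_univ_four, g_inv_eq M a (x 1) (x 2) hΔ hSg hs hD, Ginv, Err, Kerr.S,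
      Matrix.vecMulVec_apply, Matrix.add_apply, Matrix.sub_apply, Matrix.smul_apply,
      Pi.smul_apply, smul_eq_mul, Matrix.of_apply, Matrix.cons_val', Matrix.cons_val_zero,
      Matrix.cons_val_one, Matrix.head_cons, Matrix.empty_val', Matrix.cons_val_fin_one,
      Matrix.cons_val_two, Matrix.tail_cons, Matrix.cons_val_three, Matrix.head_fin_const]
    ring
  have epdp2B : pdp 2 (quadF4 (fun r θ =>
        (r^2) • (Kerr.g M a r θ)⁻¹
          + (Kerr.Δ M a r)⁻¹ • Matrix.vecMulVec (Kerr.S a r) (Kerr.S a r)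
          - Kerr.Δ M a r • Err)) (x, p)
      = 2*((x 1)^2*(Kerr.Sig a (x 1) (x 2))⁻¹)*p 2 := by
    rw [pdp_quadF4]
    simp only [Fin.sum_univ_four, g_inv_eq M a (x 1) (x 2) hΔ hSg hs hD, Ginv, Err, Kerr.S,
      Matrix.vecMulVec_apply, Matrix.add_apply, Matrix.sub_apply, Matrix.smul_apply,
      Pi.smul_apply, smul_eq_mul, Matrix.of_apply, Matrix.cons_val', Matrix.cons_val_zero,
      Matrix.cons_val_one, Matrix.head_cons, Matrix.empty_val', Matrix.cons_val_fin_one,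
      Matrix.cons_val_two, Matrix.tail_cons, Matrix.cons_val_three, Matrix.head_fin_const]
    ring
  have e0A := pdx_other (fun r θ => (Kerr.g M a r θ)⁻¹) (x, p) 0 (by decide) (by decide)
  have e3A := pdx_other (fun r θ => (Kerr.g M a r θ)⁻¹) (x, p) 3 (by decide) (by decide)
  have e0B := pdx_other (fun r θ =>
        (r^2) • (Kerr.g M a r θ)⁻¹
          + (Kerr.Δ M a r)⁻¹ • Matrix.vecMulVec (Kerr.S a r) (Kerr.S a r)
          - Kerr.Δ M a r • Err) (x, p) 0 (by decide) (by decide)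
  have e3B := pdx_other (fun r θ =>
        (r^2) • (Kerr.g M a r θ)⁻¹
          + (Kerr.Δ M a r)⁻¹ • Matrix.vecMulVec (Kerr.S a r) (Kerr.S a r)
          - Kerr.Δ M a r • Err) (x, p) 3 (by decide) (by decide)
  unfold poisson
  rw [Fin.sum_univ_four]
  rw [e0A, e0B, e3A, e3B, epdx1A, epdx1B, epdx2B, epdp1A, epdp1B, epdp2A, epdp2B]
  unfold dPsi dPhi dN Phif Nf Qf
  field_simp
  ring
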